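/- Let a, b, c, δ ∈ ℝ, let Ω₁ be the 4×4 real matrix with rows (0, a, 0, 0), (−a, 0, c, b), (0, −c, 0, 0), (0, −b, 0, 0), and set t = 4/(4 + δ²(a² + b² + c²)). Then the matrix Id + δ t (Ω₁ + (δ/2) Ω₁²) is an orthogonal matrix; consequently, for any orthogonal 4×4 matrix F₀, the matrix F₀ (Id + δ t (Ω₁ + (δ/2) Ω₁²)) is orthogonal. -/

import Mathlib

open Real Set

set_option maxHeartbeats 1600000 in
/-- For `a, b, c, δ ∈ ℝ`, with `Ω₁` the skew-symmetric matrix with rows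
`(0,a,0,0), (−a,0,c,b), (0,−c,0,0), (0,−b,0,0)` and `t = 4/(4 + δ²(a² + b² + c²))`, the matrix
`Id + δt(Ω₁ + (δ/2)Ω₁²)` is orthogonal; consequently, for any orthogonal `F₀`, the matrix
`F₀ (Id + δt(Ω₁ + (δ/2)Ω₁²))` is orthogonal. -/
theorem stmt19 (a b c δ : ℝ) :
    let Ω1 : Matrix (Fin 4) (Fin 4) ℝ :=
      !![0, a, 0, 0;
         -a, 0, c, b;
         0, -c, 0, 0;
         0, -b, 0, 0]
    let t : ℝ := 4 / (4 + δ ^ 2 * (a ^ 2 + b ^ 2 + c ^ 2))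
    let M : Matrix (Fin 4) (Fin 4) ℝ := 1 + (δ * t) • (Ω1 + (δ / 2) • (Ω1 * Ω1))
    M ∈ Matrix.orthogonalGroup (Fin 4) ℝ ∧
    ∀ F0 : Matrix (Fin 4) (Fin 4) ℝ, F0 ∈ Matrix.orthogonalGroup (Fin 4) ℝ →
      F0 * M ∈ Matrix.orthogonalGroup (Fin 4) ℝ := by
  intro Ω1 t M
  have hd : (4 : ℝ) + δ ^ 2 * (a ^ 2 + b ^ 2 + c ^ 2) ≠ 0 := by positivity
  obtain ⟨s, hs, key⟩ : ∃ s : ℝ, δ * t = s ∧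
      s * (4 + δ ^ 2 * (a ^ 2 + b ^ 2 + c ^ 2)) = 4 * δ := by
    refine ⟨δ * t, rfl, ?_⟩
    show δ * (4 / (4 + δ ^ 2 * (a ^ 2 + b ^ 2 + c ^ 2))) * _ = _
    field_simp
  set N : Matrix (Fin 4) (Fin 4) ℝ :=
    !![1 - s*(δ/2)*a^2, s*a, s*(δ/2)*(a*c), s*(δ/2)*(a*b);
      -(s*a), 1 - s*(δ/2)*(a^2+b^2+c^2), s*c, s*b;
      s*(δ/2)*(a*c), -(s*c), 1 - s*(δ/2)*c^2, -(s*(δ/2)*(b*c));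
      s*(δ/2)*(a*b), -(s*b), -(s*(δ/2)*(b*c)), 1 - s*(δ/2)*b^2] with hNdef
  have hsq : Ω1 * Ω1 = !![-a^2, 0, a*c, a*b;
      0, -(a^2+b^2+c^2), 0, 0;
      a*c, 0, -c^2, -(b*c);
      a*b, 0, -(b*c), -b^2] := by
    ext i j
    fin_cases i <;> fin_cases j <;>
      simp [Ω1, Matrix.mul_apply, Fin.sum_univ_four, Matrix.vecHead, Matrix.vecTail] <;> ring
  have hN : M = N := by
    show (1 : Matrix (Fin 4) (Fin 4) ℝ) + (δ * t) • (Ω1 + (δ / 2) • (Ω1 * Ω1)) = N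
    rw [hs, hsq, hNdef]
    ext i j
    fin_cases i <;> fin_cases j <;>
      simp [Ω1, Matrix.one_apply, Matrix.add_apply, Matrix.smul_apply,
        Matrix.vecHead, Matrix.vecTail] <;> ring
  have hstar : star N = !![1 - s*(δ/2)*a^2, -(s*a), s*(δ/2)*(a*c), s*(δ/2)*(a*b);
      s*a, 1 - s*(δ/2)*(a^2+b^2+c^2), -(s*c), -(s*b);
      s*(δ/2)*(a*c), s*c, 1 - s*(δ/2)*c^2, -(s*(δ/2)*(b*c));
      s*(δ/2)*(a*b), s*b, -(s*(δ/2)*(b*c)), 1 - s*(δ/2)*b^2] := by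
    rw [hNdef]
    ext i j
    fin_cases i <;> fin_cases j <;>
      simp [Matrix.star_apply, Matrix.vecHead, Matrix.vecTail]
  have hM : M ∈ Matrix.orthogonalGroup (Fin 4) ℝ := by
    rw [Matrix.mem_orthogonalGroup_iff, hN, show N.transpose = star N by rw [Matrix.star_eq_conjTranspose, Matrix.conjTranspose_eq_transpose_of_trivial], hstar, hNdef]
    ext i j
    fin_cases i <;> fin_cases j <;>
      simp [Matrix.mul_apply, Matrix.one_apply, Fin.sum_univ_four, Matrix.vecHead, Matrix.vecTail]
    · linear_combination (s*a^2/4) * key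
    · ring
    · linear_combination (-(s*a*c)/4) * key
    · linear_combination (-(s*a*b)/4) * key
    · ring
    · linear_combination (s*(a^2+b^2+c^2)/4) * key
    · ring
    · ring
    · linear_combination (-(s*a*c)/4) * key
    · ring
    · linear_combination (s*c^2/4) * key
    · linear_combination (s*b*c/4) * key
    · linear_combination (-(s*a*b)/4) * key
    · ring
    · linear_combination (s*b*c/4) * key
    · linear_combination (s*b^2/4) * key
  exact ⟨hM, fun F0 hF0 => mul_mem hF0 hM⟩
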